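/- arXiv:2503.13678 — 4 statements merged into one kernel-verified Lean document; each statement's English description precedes it below -/
import Mathlib

section
/- In an M-adhesive category, every arrow belonging to M is a regular monomorphism. -/
open CategoryTheory CategoryTheory.Limits

universe v u

variable {C : Type u} [Category.{v} C]

/-- The square `f, m, n, g` (with `f ≫ n = m ≫ g`) is an `M`-Van Kampen square:
it is a pushout, and for every commuting cube over it with pullbacks as back and left
faces and vertical arrows in `M`, the top face is a pushout iff the front and right
faces are pullbacks. -/
def IsMVanKampenSquare (M : MorphismProperty C) {A B X Y : C}
    (f : A ⟶ B) (m : A ⟶ X) (n : B ⟶ Y) (g : X ⟶ Y) : Prop :=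
  IsPushout f m n g ∧
    ∀ {A' B' X' Y' : C} (f' : A' ⟶ B') (m' : A' ⟶ X') (n' : B' ⟶ Y') (g' : X' ⟶ Y')
      (a : A' ⟶ A) (b : B' ⟶ B) (x : X' ⟶ X) (y : Y' ⟶ Y),
      n' ≫ y = b ≫ n → g' ≫ y = x ≫ g →
      IsPullback f' a b f → IsPullback m' a x m →
      M a → M b → M x → M y →
      (IsPushout f' m' n' g' ↔ (IsPullback n' b y n ∧ IsPullback g' x y g))

/-- `C` is an `M`-adhesive category. -/
structure MAdhesive (M : MorphismProperty C) : Prop where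
  le_mono : ∀ {A B : C} (i : A ⟶ B), M i → Mono i
  iso_mem : ∀ {A B : C} (i : A ⟶ B), IsIso i → M i
  comp_mem : ∀ {A B D : C} (i : A ⟶ B) (j : B ⟶ D), M i → M j → M (i ≫ j)
  decomp_mem : ∀ {A B D : C} (i : A ⟶ B) (j : B ⟶ D), M j → M (i ≫ j) → M i
  pullback_stable : ∀ {A B X Y : C} (f : A ⟶ B) (m : A ⟶ X) (n : B ⟶ Y) (g : X ⟶ Y),
    IsPullback f m n g → M n → M m
  pushout_stable : ∀ {A B X Y : C} (f : A ⟶ B) (m : A ⟶ X) (n : B ⟶ Y) (g : X ⟶ Y),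
    IsPushout f m n g → M m → M n
  hasPullback : ∀ {A B X : C} (f : A ⟶ B) (m : X ⟶ B), M m → HasPullback f m
  hasPushout : ∀ {A B X : C} (f : A ⟶ B) (m : A ⟶ X), M m → HasPushout f m
  vanKampen : ∀ {A B X Y : C} (f : A ⟶ B) (m : A ⟶ X) (n : B ⟶ Y) (g : X ⟶ Y),
    M m → IsPushout f m n g → IsMVanKampenSquare M f m n g


/-- In an `M`-adhesive category, every arrow belonging to `M` is a regular monomorphism. -/
theorem MAdhesive.regularMono_of_mem {M : MorphismProperty C} (hC : MAdhesive M)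
    {A B : C} (i : A ⟶ B) (hi : M i) : Nonempty (RegularMono i) := by
  have hm : Mono i := hC.le_mono i hi
  have hp : HasPushout i i := hC.hasPushout i i hi
  have hpo : IsPushout i i (pushout.inl i i) (pushout.inr i i) := IsPushout.of_hasPushout i i
  have hMu : M (pushout.inl i i) := hC.pushout_stable _ _ _ _ hpo hi
  have hvk := hC.vanKampen i i _ _ hi hpo
  have hid : IsPullback (𝟙 A) (𝟙 A) i i := IsKernelPair.id_of_mono i
  have hback : IsPullback i (𝟙 A) (𝟙 B) i := IsPullback.of_vert_isIso ⟨by simp⟩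
  have htop : IsPushout i (𝟙 A) (𝟙 B) i := IsPushout.of_vert_isIso ⟨by simp⟩
  have h := (hvk.2 i (𝟙 A) (𝟙 B) i (𝟙 A) (𝟙 B) i (pushout.inl i i)
      (by simp) (by simpa using hpo.w) hback hid
      (hC.iso_mem (𝟙 A) (by infer_instance)) (hC.iso_mem (𝟙 B) (by infer_instance))
      hi hMu).mp htop
  exact ⟨{ Z := pushout i i
           left := pushout.inl i i
           right := pushout.inr i i
           w := hpo.w
           isLimit := Fork.IsLimit.mk _
             (fun s => h.2.lift s.ι s.ι s.condition)
             (fun s => h.2.lift_fst _ _ _)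
             (fun s m' hm' => by
               apply h.2.hom_ext <;> simp only [h.2.lift_fst, h.2.lift_snd] <;> exact hm') }⟩
end

section
/- Let f : X → Y and g : Z → W have kernel pairs, h : X → Z and t : Y → W with g ∘ h = t ∘ f, and let k_h : K_f → K_g be the induced arrow between kernel pairs. If the square (f, h, t, g) is a pullback, then the squares with sides k_h, π¹ and k_h, π² (i.e. π¹_g ∘ k_h = h ∘ π¹_f and π²_g ∘ k_h = h ∘ π²_f) are pullbacks. -/
open CategoryTheory CategoryTheory.Limits

universe v u

private lemma kernelPair_induced_pullback_aux {C : Type u} [Category.{v} C]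
    {X Y Z W Kf Kg : C}
    (f : X ⟶ Y) (g : Z ⟶ W) (h : X ⟶ Z) (t : Y ⟶ W)
    (f₁ f₂ : Kf ⟶ X) (g₁ g₂ : Kg ⟶ Z)
    (hf : IsKernelPair f f₁ f₂) (hg : IsKernelPair g g₁ g₂)
    (hpb : IsPullback h f g t)
    (k : Kf ⟶ Kg) (hk₁ : k ≫ g₁ = f₁ ≫ h) (hk₂ : k ≫ g₂ = f₂ ≫ h) :
    IsPullback k f₁ g₁ h := by
  have comm : k ≫ g₁ = f₁ ≫ h := hk₁
  refine IsPullback.of_isLimit' ⟨comm⟩ ?_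
  refine PullbackCone.IsLimit.mk _ (fun s => ?_) (fun s => ?_) (fun s => ?_) (fun s m hm₁ hm₂ => ?_)
  · -- lift
    refine hf.lift s.snd (hpb.lift (s.fst ≫ g₂) (s.snd ≫ f) ?_) ?_
    · simp only [Category.assoc]
      rw [show g₂ ≫ g = g₁ ≫ g from hg.1.1.symm, ← Category.assoc, s.condition, Category.assoc, hpb.1.1]
    · exact (hpb.lift_snd _ _ _).symm
  · -- fac with k (fst of cone = PullbackCone.mk k f₁)
    apply hg.hom_ext
    · rw [Category.assoc, hk₁, ← Category.assoc, hf.lift_fst, s.condition]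
    · rw [Category.assoc, hk₂, ← Category.assoc, hf.lift_snd, hpb.lift_fst]
  · exact hf.lift_fst _ _ _
  · apply hf.hom_ext
    · rw [hf.lift_fst]; exact hm₂
    · rw [hf.lift_snd]
      apply hpb.hom_ext
      · rw [Category.assoc, ← hk₂, ← Category.assoc, hm₁, hpb.lift_fst]
      · have : m ≫ f₂ ≫ f = s.snd ≫ f := by
          rw [← hm₂, Category.assoc, ← hf.1.1]
        simp only [Category.assoc]
        rw [this]; exact (hpb.lift_snd _ _ _).symm

/-- If the square `(h, f, g, t)` is a pullback, then the two squares relating the induced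
arrow `k` between the kernel pairs of `f` and `g` with the kernel pair projections are
pullbacks. -/
theorem kernelPair_induced_pullback {C : Type u} [Category.{v} C] {X Y Z W Kf Kg : C}
    (f : X ⟶ Y) (g : Z ⟶ W) (h : X ⟶ Z) (t : Y ⟶ W)
    (f₁ f₂ : Kf ⟶ X) (g₁ g₂ : Kg ⟶ Z)
    (hf : IsKernelPair f f₁ f₂) (hg : IsKernelPair g g₁ g₂)
    (hpb : IsPullback h f g t) :
    ∀ k : Kf ⟶ Kg, k ≫ g₁ = f₁ ≫ h → k ≫ g₂ = f₂ ≫ h →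
      IsPullback k f₁ g₁ h ∧ IsPullback k f₂ g₂ h := by
  intro k hk₁ hk₂
  exact ⟨kernelPair_induced_pullback_aux f g h t f₁ f₂ g₁ g₂ hf hg hpb k hk₁ hk₂,
    kernelPair_induced_pullback_aux f g h t f₂ f₁ g₂ g₁ hf.flip hg.flip hpb k hk₂ hk₁⟩
end

section
/- In a category with pullbacks and binary products, let f : X → Y and g : Z → W have kernel pairs, and let h : X → Z be a monomorphism and t : Y → W such that (f, h, t, g) is a pullback square. Then the square formed by the induced arrow k_h : K_f → K_g, the pairings ⟨π¹_f, π²_f⟩ : K_f → X × X, ⟨π¹_g, π²_g⟩ : K_g → Z × Z, and h × h : X × X → Z × Z is a pullback. -/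
open CategoryTheory CategoryTheory.Limits

universe v u

/-!
If `⟨x₁, x₂⟩ ≫ (h × h)` factors through `⟨g₁, g₂⟩ : K_g ⟶ Z ⨯ Z`, then `x₁ ≫ h` and `x₂ ≫ h` are
equalised by `g`. Since `h` is a monomorphism and `(h, f, g, t)` is a pullback, this forces
`x₁ ≫ f = x₂ ≫ f`, so `⟨x₁, x₂⟩` factors through `K_f`. Both pairings into the products are
monomorphisms, which gives uniqueness of the factorisation and its compatibility with `k_h`.
-/

namespace CategoryTheory

variable {C : Type u} [Category.{v} C]

theorem IsPullback.comp_snd_eq_of_comp_fst_comp_eq {P X Y Z Q : C} {fst : P ⟶ X}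
    {snd : P ⟶ Y} {f : X ⟶ Z} {g : Y ⟶ Z} (hP : IsPullback fst snd f g) [Mono fst]
    {x₁ x₂ : Q ⟶ P} (w : x₁ ≫ fst ≫ f = x₂ ≫ fst ≫ f) : x₁ ≫ snd = x₂ ≫ snd := by
  obtain ⟨m, hm_fst, hm_snd⟩ := hP.exists_lift (x₂ ≫ fst) (x₁ ≫ snd)
    (by simp only [Category.assoc]; rw [← w, hP.w])
  obtain rfl : m = x₂ := (cancel_mono fst).1 hm_fst
  exact hm_snd.symm

theorem IsKernelPair.mono_prod_lift {X Y K : C} {f : X ⟶ Y} {a b : K ⟶ X}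
    [HasBinaryProduct X X] (hf : IsKernelPair f a b) : Mono (prod.lift a b) :=
  ⟨fun u v huv => hf.hom_ext
    (by simpa only [Category.assoc, prod.lift_fst] using huv =≫ prod.fst)
    (by simpa only [Category.assoc, prod.lift_snd] using huv =≫ prod.snd)⟩

theorem IsPullback.of_forall_exists_lift_of_mono {P X Y Z : C} {fst : P ⟶ X}
    {snd : P ⟶ Y} {f : X ⟶ Z} {g : Y ⟶ Z} [Mono snd] [Mono f] (w : fst ≫ f = snd ≫ g)
    (lift : ∀ {Q : C} (a : Q ⟶ X) (b : Q ⟶ Y), a ≫ f = b ≫ g → ∃ l : Q ⟶ P, l ≫ snd = b) :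
    IsPullback fst snd f g := by
  choose l hl using fun s : PullbackCone f g => lift s.fst s.snd s.condition
  have hl_fst (s : PullbackCone f g) : l s ≫ fst = s.fst :=
    (cancel_mono f).1 (by rw [Category.assoc, w, reassoc_of% hl s, s.condition])
  refine IsPullback.of_isLimit' ⟨w⟩ (PullbackCone.IsLimit.mk w l hl_fst hl ?_)
  intro s m _ hm_snd
  exact (cancel_mono snd).1 (hm_snd.trans (hl s).symm)

end CategoryTheory

theorem kernelPair_induced_pullback_prod_general {C : Type u} [Category.{v} C]
    [HasBinaryProducts C] {X Y Z W Kf Kg : C}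
    (f : X ⟶ Y) (g : Z ⟶ W) (h : X ⟶ Z) (t : Y ⟶ W)
    (f₁ f₂ : Kf ⟶ X) (g₁ g₂ : Kg ⟶ Z)
    (hf : IsKernelPair f f₁ f₂) (hg : IsKernelPair g g₁ g₂)
    (hmono : Mono h) (hpb : IsPullback h f g t) :
    ∀ k : Kf ⟶ Kg, k ≫ g₁ = f₁ ≫ h → k ≫ g₂ = f₂ ≫ h →
      IsPullback k (prod.lift f₁ f₂) (prod.lift g₁ g₂) (prod.map h h) := by
  intro k hk₁ hk₂
  have := IsKernelPair.mono_prod_lift hf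
  have := IsKernelPair.mono_prod_lift hg
  refine .of_forall_exists_lift_of_mono (by ext <;> simp [hk₁, hk₂]) fun a b hab => ?_
  have hab₁ : a ≫ g₁ = b ≫ prod.fst ≫ h := by
    simpa only [Category.assoc, prod.lift_fst, prod.map_fst] using hab =≫ prod.fst
  have hab₂ : a ≫ g₂ = b ≫ prod.snd ≫ h := by
    simpa only [Category.assoc, prod.lift_snd, prod.map_snd] using hab =≫ prod.snd
  have hb : (b ≫ prod.fst) ≫ f = (b ≫ prod.snd) ≫ f :=
    hpb.comp_snd_eq_of_comp_fst_comp_eq (by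
      simp only [Category.assoc]
      rw [← reassoc_of% hab₁, ← reassoc_of% hab₂, hg.w])
  exact ⟨hf.lift _ _ hb, by ext <;> simp only [Category.assoc, prod.lift_fst, prod.lift_snd,
    IsKernelPair.lift_fst, IsKernelPair.lift_snd]⟩

/-- In a category with pullbacks and binary products, if `h` is a monomorphism and the
square `(h, f, g, t)` is a pullback, then the square formed by the induced arrow
`k : K_f ⟶ K_g`, the pairings `⟨f₁, f₂⟩`, `⟨g₁, g₂⟩` and `h × h` is a pullback. -/
theorem kernelPair_induced_pullback_prod {C : Type u} [Category.{v} C]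
    [HasPullbacks C] [HasBinaryProducts C] {X Y Z W Kf Kg : C}
    (f : X ⟶ Y) (g : Z ⟶ W) (h : X ⟶ Z) (t : Y ⟶ W)
    (f₁ f₂ : Kf ⟶ X) (g₁ g₂ : Kg ⟶ Z)
    (hf : IsKernelPair f f₁ f₂) (hg : IsKernelPair g g₁ g₂)
    (hmono : Mono h) (hpb : IsPullback h f g t) :
    ∀ k : Kf ⟶ Kg, k ≫ g₁ = f₁ ≫ h → k ≫ g₂ = f₂ ≫ h →
      IsPullback k (prod.lift f₁ f₂) (prod.lift g₁ g₂) (prod.map h h) :=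
  kernelPair_induced_pullback_prod_general f g h t f₁ f₂ g₁ g₂ hf hg hmono hpb
end

section
/- In Set, suppose given a commuting cube whose top face (A' → B', A' → C', B' → D', C' → D') is a pushout with m' : A' → C' injective, whose left face and bottom face are pullbacks, and whose bottom-right vertical-adjacent arrow n : B → D is an injection. Then the right face of the cube (the square B' → D', B' → B, D' → D, B → D) is a pullback. -/
/-!
Pasting the left and bottom faces shows that `m'` is the pullback of the injection `n` along
`g' ≫ d`. An element of `D'` over `n x` lies in the image of `n'` or of `g'`, since the top face is a
pushout: in the first case injectivity of `n` identifies its preimage over `x`, in the second the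
pasted pullback lifts it to `A'`, whose image under `f'` is the required preimage. Uniqueness holds
because `n'`, a pushout of the injection `m'`, is injective.
-/

open CategoryTheory CategoryTheory.Limits

universe u

namespace CategoryTheory.Limits.Types

theorem isPullback_of_isPushout_of_isPullback_comp {A' B' C' D' B D : Type u}
    {f' : A' ⟶ B'} {m' : A' ⟶ C'} {n' : B' ⟶ D'} {g' : C' ⟶ D'}
    {b : B' ⟶ B} {d : D' ⟶ D} {n : B ⟶ D}
    (htop : IsPushout f' m' n' g') (hright : n' ≫ d = b ≫ n) (hn : Function.Injective n)
    (hcomp : IsPullback m' (f' ≫ b) (g' ≫ d) n) :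
    IsPullback n' b d n := by
  have : Mono n := (mono_iff_injective n).2 hn
  have hm' : Function.Injective m' := (mono_iff_injective m').1 hcomp.mono_fst_of_mono
  have hn' : Function.Injective n' :=
    pushoutCocone_inr_injective_of_isColimit htop.flip.isColimit hm'
  rw [isPullback_iff]
  refine ⟨hright, fun z₁ z₂ h ↦ hn' h.1, fun y x hyx ↦ ?_⟩
  obtain ⟨z, rfl⟩ | ⟨w, rfl⟩ := eq_or_eq_of_isPushout htop y
  · exact ⟨z, rfl, hn ((ConcreteCategory.congr_hom hright z).symm.trans hyx)⟩
  · obtain ⟨a', rfl, rfl⟩ := exists_of_isPullback hcomp w x hyx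
    exact ⟨f' a', ConcreteCategory.congr_hom htop.w a', rfl⟩

end CategoryTheory.Limits.Types

theorem cube_right_face_pullback_general {A' B' C' D' A B C D : Type u}
    (f' : A' ⟶ B') (m' : A' ⟶ C') (n' : B' ⟶ D') (g' : C' ⟶ D')
    (f : A ⟶ B) (m : A ⟶ C) (n : B ⟶ D) (g : C ⟶ D)
    (a : A' ⟶ A) (b : B' ⟶ B) (c : C' ⟶ C) (d : D' ⟶ D)
    (hback : f' ≫ b = a ≫ f) (hright : n' ≫ d = b ≫ n) (hfront : g' ≫ d = c ≫ g)
    (htop : IsPushout f' m' n' g')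
    (hleft : IsPullback m' a c m) (hbot : IsPullback f m n g)
    (hn : Function.Injective n) :
    IsPullback n' b d n := by
  have hcomp : IsPullback m' (f' ≫ b) (g' ≫ d) n := by
    rw [hback, hfront]
    exact hleft.paste_vert hbot.flip
  exact Types.isPullback_of_isPushout_of_isPullback_comp htop hright hn hcomp

/-- In `Set`: given a commuting cube whose top face is a pushout with `m'` injective,
whose left and bottom faces are pullbacks, and whose arrow `n : B → D` is injective,
the right face of the cube is a pullback. -/
theorem cube_right_face_pullback {A' B' C' D' A B C D : Type u}
    (f' : A' ⟶ B') (m' : A' ⟶ C') (n' : B' ⟶ D') (g' : C' ⟶ D')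
    (f : A ⟶ B) (m : A ⟶ C) (n : B ⟶ D) (g : C ⟶ D)
    (a : A' ⟶ A) (b : B' ⟶ B) (c : C' ⟶ C) (d : D' ⟶ D)
    (hback : f' ≫ b = a ≫ f) (hright : n' ≫ d = b ≫ n) (hfront : g' ≫ d = c ≫ g)
    (htop : IsPushout f' m' n' g') (hm' : Function.Injective m')
    (hleft : IsPullback m' a c m) (hbot : IsPullback f m n g)
    (hn : Function.Injective n) :
    IsPullback n' b d n :=
  cube_right_face_pullback_general f' m' n' g' f m n g a b c d hback hright hfront htop hleft hbot
    hn
end
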